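/- arXiv:2601.14638 — 6 statements merged into one kernel-verified Lean document; each statement's English description precedes it below -/
import Mathlib

section
/- If a finite family of unit vectors {φ_j}_{j=1}^m in a complex Hilbert space admits positive semidefinite operators E_1, …, E_m with ⟨φ_j, E_i φ_j⟩ = 0 for all j ≠ i and ⟨φ_i, E_i φ_i⟩ > 0 for all i, then the vectors φ_1, …, φ_m are linearly independent. -/
/-!
Each `E i` is a positive operator, so by the Cauchy–Schwarz inequality for the semi-inner product
`(x, y) ↦ ⟪x, E i y⟫` it annihilates every vector `x` with `⟪x, E i x⟫ = 0`; in particular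
`E i (φ j) = 0` for `j ≠ i`. Applying `E i` to a vanishing combination `∑ j, c j • φ j` therefore
leaves `c i • E i (φ i) = 0`, and pairing with `φ i` gives `c i = 0` since `⟪φ i, E i (φ i)⟫ ≠ 0`.
-/

open scoped ComplexInnerProductSpace ComplexOrder

namespace LinearMap

section RCLike

variable {𝕜 E : Type*} [RCLike 𝕜] [NormedAddCommGroup E] [InnerProductSpace 𝕜 E]

local notation "⟪" x ", " y "⟫" => inner 𝕜 x y

/-- The quadratic form `s ↦ re ⟪T (x + s • T x), x + s • T x⟫` is nonnegative with discriminant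
`4 ‖T x‖⁴` when `⟪T x, x⟫ = 0`. -/
theorem IsPositive.apply_eq_zero_of_inner_map_self_eq_zero {T : E →ₗ[𝕜] E}
    (hT : T.IsPositive) {x : E} (hx : ⟪T x, x⟫ = 0) : T x = 0 := by
  have hquad : ∀ s : ℝ, 0 ≤ RCLike.re ⟪T (T x), T x⟫ * (s * s) + 2 * ‖T x‖ ^ 2 * s + 0 := by
    intro s
    have h := hT.re_inner_nonneg_left (x + (s : 𝕜) • T x)
    rw [map_add, map_smul, inner_add_left, inner_add_right, inner_add_right, inner_smul_left,
      inner_smul_right, inner_smul_left, inner_smul_right, hx, hT.isSymmetric (T x) x,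
      inner_self_eq_norm_sq_to_K] at h
    simp only [RCLike.conj_ofReal, zero_add, ← RCLike.ofReal_pow, map_add, RCLike.re_ofReal_mul,
      RCLike.ofReal_re] at h
    linarith
  have hdisc := discrim_le_zero hquad
  rw [discrim] at hdisc
  simpa using hdisc

end RCLike

theorem isPositive_of_inner_nonneg_right {E : Type*} [NormedAddCommGroup E] [InnerProductSpace ℂ E]
    {T : E →ₗ[ℂ] E} (hT : ∀ x, 0 ≤ ⟪x, T x⟫) : T.IsPositive := by
  have hreal : ∀ x, starRingEnd ℂ ⟪x, T x⟫ = ⟪x, T x⟫ :=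
    fun x => Complex.conj_eq_iff_im.mpr (Complex.nonneg_iff.mp (hT x)).2.symm
  refine (isPositive_iff T).mpr ⟨?_, fun x => ?_⟩
  · rw [isSymmetric_iff_inner_map_self_real]
    intro x
    rw [← inner_conj_symm, Complex.conj_conj, hreal]
  · rw [← inner_conj_symm, hreal]
    exact hT x

end LinearMap

theorem stmt4_general {H : Type*} [NormedAddCommGroup H] [InnerProductSpace ℂ H]
    (m : ℕ) (φ : Fin m → H)
    (E : Fin m → H →ₗ[ℂ] H)
    (hpsd : ∀ i (x : H), 0 ≤ ⟪x, E i x⟫)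
    (hoff : ∀ i j, j ≠ i → ⟪φ j, E i (φ j)⟫ = 0)
    (hdiag : ∀ i, 0 < ⟪φ i, E i (φ i)⟫) :
    LinearIndependent ℂ φ := by
  rw [Fintype.linearIndependent_iff]
  intro c hc i
  have hE : (E i).IsPositive := LinearMap.isPositive_of_inner_nonneg_right (hpsd i)
  have hkill : ∀ j ≠ i, E i (φ j) = 0 := fun j hj =>
    hE.apply_eq_zero_of_inner_map_self_eq_zero (by rw [hE.isSymmetric]; exact hoff i j hj)
  have hci : c i • E i (φ i) = 0 := by
    have := congrArg (E i) hc
    rwa [map_sum, map_zero, Finset.sum_eq_single i (fun j _ hj => by rw [map_smul, hkill j hj,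
      smul_zero]) (by simp), map_smul] at this
  have hpair : c i * ⟪φ i, E i (φ i)⟫ = 0 := by
    rw [← inner_smul_right, hci, inner_zero_right]
  exact (mul_eq_zero.mp hpair).resolve_right (hdiag i).ne'

/-- if unit vectors `φ j` admit positive semidefinite operators `E i`
with `⟨φ j, E i φ j⟩ = 0` for `j ≠ i` and `⟨φ i, E i φ i⟩ > 0`, then the `φ j`
are linearly independent. -/
theorem stmt4 {H : Type*} [NormedAddCommGroup H] [InnerProductSpace ℂ H] [CompleteSpace H]
    (m : ℕ) (φ : Fin m → H) (hφ : ∀ j, ‖φ j‖ = 1)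
    (E : Fin m → H →ₗ[ℂ] H)
    (hpsd : ∀ i (x : H), 0 ≤ ⟪x, E i x⟫)
    (hoff : ∀ i j, j ≠ i → ⟪φ j, E i (φ j)⟫ = 0)
    (hdiag : ∀ i, 0 < ⟪φ i, E i (φ i)⟫) :
    LinearIndependent ℂ φ :=
  stmt4_general m φ E hpsd hoff hdiag
end

section
/- If a finite family of unit vectors {φ_j}_{j=1}^m in a finite-dimensional complex Hilbert space is linearly independent, then there exist positive semidefinite operators E_1, …, E_m with E_1 + … + E_m ≤ 1 (as operators), ⟨φ_j, E_i φ_j⟩ = 0 for all j ≠ i, and ⟨φ_i, E_i φ_i⟩ > 0 for all i. -/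
/-! Representing the coordinate functionals of `φ` on its span by vectors of the span (Riesz)
gives a biorthogonal family: `⟪ψ i, φ j⟫ = δ i j`. The rank-one operators `c • |ψ i⟩⟨ψ i|` are
then positive, vanish in `φ j` for `j ≠ i` and take the value `c` in `φ i`. By Cauchy–Schwarz
their sum is at most `c ∑ ‖ψ i‖²` times the identity, so `c = (1 + ∑ ‖ψ i‖²)⁻¹` works. -/

open scoped ComplexInnerProductSpace ComplexOrder
open InnerProductSpace

section
variable {𝕜 E ι : Type*} [RCLike 𝕜] [NormedAddCommGroup E] [InnerProductSpace 𝕜 E]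

theorem LinearIndependent.exists_biorthogonal [Finite ι] {φ : ι → E}
    (hφ : LinearIndependent 𝕜 φ) :
    ∃ ψ : ι → E, ∀ i j, ⟪ψ i, φ j⟫_𝕜 = Finsupp.single j 1 i := by
  let W := Submodule.span 𝕜 (Set.range φ)
  let b := Module.Basis.span hφ
  have : FiniteDimensional 𝕜 W := b.finiteDimensional_of_finite
  let ψ i : W := (toDual 𝕜 W).symm (LinearMap.toContinuousLinearMap (b.coord i))
  refine ⟨fun i => ψ i, fun i j => ?_⟩
  calc ⟪(ψ i : E), φ j⟫_𝕜 = ⟪ψ i, b j⟫_𝕜 := by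
        rw [Submodule.coe_inner, Module.Basis.coe_span_apply]
    _ = b.coord i (b j) := toDual_symm_apply
    _ = Finsupp.single j 1 i := by simp

theorem inner_smul_rankOne_self_apply (c : ℝ) (ψ x : E) :
    ⟪x, ((c : 𝕜) • rankOne 𝕜 ψ ψ : E →ₗ[𝕜] E) x⟫_𝕜 = ((c * ‖⟪ψ, x⟫_𝕜‖ ^ 2 : ℝ) : 𝕜) := by
  rw [LinearMap.smul_apply, ContinuousLinearMap.coe_coe, rankOne_apply, inner_smul_right,
    inner_smul_right, ← inner_conj_symm x ψ, RCLike.mul_conj]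
  push_cast; ring

theorem sum_norm_inner_sq_le [Fintype ι] (ψ : ι → E) (x : E) :
    ∑ i, ‖⟪ψ i, x⟫_𝕜‖ ^ 2 ≤ (∑ i, ‖ψ i‖ ^ 2) * ‖x‖ ^ 2 := by
  rw [Finset.sum_mul]
  gcongr with i
  rw [← mul_pow]
  gcongr
  exact norm_inner_le_norm _ _

theorem inner_sub_inner_sum_smul_rankOne_self_nonneg [Fintype ι] (ψ : ι → E) (x : E) :
    0 ≤ ⟪x, x⟫_𝕜 - ⟪x, (∑ i, (((1 + ∑ j, ‖ψ j‖ ^ 2)⁻¹ : ℝ) : 𝕜) •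
      (rankOne 𝕜 (ψ i) (ψ i) : E →ₗ[𝕜] E)) x⟫_𝕜 := by
  set S := ∑ j, ‖ψ j‖ ^ 2
  have hS : 0 < 1 + S := by positivity
  rw [LinearMap.sum_apply, inner_sum]
  simp only [inner_smul_rankOne_self_apply, inner_self_eq_norm_sq_to_K]
  rw [← RCLike.ofReal_sum, ← RCLike.ofReal_pow, ← RCLike.ofReal_sub, RCLike.ofReal_nonneg,
    sub_nonneg, ← Finset.mul_sum, inv_mul_le_iff₀ hS]
  calc ∑ i, ‖⟪ψ i, x⟫_𝕜‖ ^ 2 ≤ S * ‖x‖ ^ 2 := sum_norm_inner_sq_le ψ x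
    _ ≤ (1 + S) * ‖x‖ ^ 2 := by gcongr; linarith

end

theorem stmt5_general {H : Type*} [NormedAddCommGroup H] [InnerProductSpace ℂ H]
    (m : ℕ) (φ : Fin m → H)
    (hli : LinearIndependent ℂ φ) :
    ∃ E : Fin m → H →ₗ[ℂ] H,
      (∀ i (x : H), 0 ≤ ⟪x, E i x⟫) ∧
      (∀ x : H, 0 ≤ ⟪x, x⟫ - ⟪x, (∑ i, E i) x⟫) ∧
      (∀ i j, j ≠ i → ⟪φ j, E i (φ j)⟫ = 0) ∧
      (∀ i, 0 < ⟪φ i, E i (φ i)⟫) := by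
  obtain ⟨ψ, hψ⟩ := hli.exists_biorthogonal
  set c : ℝ := (1 + ∑ i, ‖ψ i‖ ^ 2)⁻¹
  have hc : 0 < c := by positivity
  refine ⟨fun i => (c : ℂ) • (rankOne ℂ (ψ i) (ψ i) : H →ₗ[ℂ] H), fun i x => ?_,
    inner_sub_inner_sum_smul_rankOne_self_nonneg ψ, fun i j hji => ?_, fun i => ?_⟩
  · exact (RCLike.ofReal_nonneg.mpr (by positivity)).trans_eq
      (inner_smul_rankOne_self_apply c (ψ i) x).symm
  · exact (inner_smul_rankOne_self_apply c (ψ i) (φ j)).trans (by simp [hψ, hji])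
  · exact (RCLike.ofReal_pos.mpr (by simpa [hψ] using hc)).trans_eq
      (inner_smul_rankOne_self_apply c (ψ i) (φ i)).symm

/-- a linearly independent family of unit vectors in a
finite-dimensional complex Hilbert space admits an unambiguous-discrimination
sub-POVM: positive semidefinite `E i` with `∑ i, E i ≤ 1`,
`⟨φ j, E i φ j⟩ = 0` for `j ≠ i`, and `⟨φ i, E i φ i⟩ > 0`. -/
theorem stmt5 {H : Type*} [NormedAddCommGroup H] [InnerProductSpace ℂ H]
    [FiniteDimensional ℂ H]
    (m : ℕ) (φ : Fin m → H) (hφ : ∀ j, ‖φ j‖ = 1)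
    (hli : LinearIndependent ℂ φ) :
    ∃ E : Fin m → H →ₗ[ℂ] H,
      (∀ i (x : H), 0 ≤ ⟪x, E i x⟫) ∧
      (∀ x : H, 0 ≤ ⟪x, x⟫ - ⟪x, (∑ i, E i) x⟫) ∧
      (∀ i j, j ≠ i → ⟪φ j, E i (φ j)⟫ = 0) ∧
      (∀ i, 0 < ⟪φ i, E i (φ i)⟫) :=
  stmt5_general m φ hli
end

section
/- Suppose E is a linear map on operators of a finite-dimensional complex Hilbert space given in Kraus form E(ρ) = Σ_k M_k ρ M_k†, and suppose unit vectors ψ_1, …, ψ_m and unit vectors φ_1, …, φ_m satisfy E(|ψ_j⟩⟨ψ_j|) = p_j |φ_j⟩⟨φ_j| with p_j > 0 for each j. If the φ_j are linearly independent, then the ψ_j are linearly independent. -/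
open scoped ComplexInnerProductSpace

/-- The rank-one "projector" `|u⟩⟨u| : x ↦ ⟨u, x⟩ • u`. -/
noncomputable def rankOne {H : Type*} [NormedAddCommGroup H] [InnerProductSpace ℂ H]
    (u : H) : H →ₗ[ℂ] H where
  toFun x := ⟪u, x⟫ • u
  map_add' x y := by simp [inner_add_right, add_smul]
  map_smul' c x := by simp [inner_smul_right, mul_smul]

/-- if a Kraus-form map `ρ ↦ ∑ k, M k ρ (M k)†` sends each pure state
`|ψ j⟩⟨ψ j|` to `p j • |φ j⟩⟨φ j|` with `p j > 0`, and the `φ j` are linearly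
independent, then the `ψ j` are linearly independent. -/
theorem stmt6 {H : Type*} [NormedAddCommGroup H] [InnerProductSpace ℂ H]
    [FiniteDimensional ℂ H]
    (m K : ℕ) (ψ φ : Fin m → H)
    (hψ : ∀ j, ‖ψ j‖ = 1) (hφ : ∀ j, ‖φ j‖ = 1)
    (p : Fin m → ℝ) (hp : ∀ j, 0 < p j)
    (M : Fin K → H →ₗ[ℂ] H)
    (hE : ∀ j, (∑ k, M k ∘ₗ rankOne (ψ j) ∘ₗ LinearMap.adjoint (M k)) =
        (p j : ℂ) • rankOne (φ j))
    (hliφ : LinearIndependent ℂ φ) :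
    LinearIndependent ℂ ψ := by
  classical
  have key : ∀ k j, ∃ l : ℂ, M k (ψ j) = l • φ j := by
    intro k j
    have hmem : M k (ψ j) ∈ (ℂ ∙ φ j) := by
      rw [← Submodule.orthogonal_orthogonal (ℂ ∙ (φ j)), Submodule.mem_orthogonal]
      intro u hu
      have hφu : ⟪φ j, u⟫ = 0 :=
        (Submodule.mem_orthogonal _ _).1 hu (φ j) (Submodule.mem_span_singleton_self _)
      have hT := congrArg (fun T : H →ₗ[ℂ] H => ⟪u, T u⟫) (hE j)
      simp only [LinearMap.sum_apply, LinearMap.comp_apply, LinearMap.smul_apply,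
        inner_sum, rankOne, LinearMap.coe_mk, AddHom.coe_mk, map_smul,
        inner_smul_right, LinearMap.adjoint_inner_right, hφu, mul_zero, zero_mul,
        smul_eq_mul] at hT
      have hterm : ∀ k', (⟪(M k') (ψ j), u⟫ * ⟪u, (M k') (ψ j)⟫ : ℂ)
          = (Complex.normSq ⟪u, (M k') (ψ j)⟫ : ℂ) := by
        intro k'
        rw [Complex.normSq_eq_conj_mul_self, inner_conj_symm]
      simp only [hterm] at hT
      rw [← Complex.ofReal_sum] at hT
      have hsum : ∑ k', Complex.normSq ⟪u, (M k') (ψ j)⟫ = 0 := by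
        exact_mod_cast hT
      have hzero := (Finset.sum_eq_zero_iff_of_nonneg
        (fun k' _ => Complex.normSq_nonneg _)).1 hsum k (Finset.mem_univ k)
      exact (Complex.normSq_eq_zero.mp hzero)
    obtain ⟨a, ha⟩ := Submodule.mem_span_singleton.mp hmem
    exact ⟨a, ha.symm⟩
  choose l hl using key
  rw [Fintype.linearIndependent_iff]
  intro c hc j
  by_contra hcj
  -- pushing the dependency through each M k
  have hlkj : ∀ k, l k j = 0 := by
    intro k
    have h0 : ∑ i, (c i * l k i) • φ i = 0 := by
      have := congrArg (M k) hc
      simp only [map_sum, map_smul, map_zero, hl, smul_smul] at this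
      exact this
    have := Fintype.linearIndependent_iff.mp hliφ (fun i => c i * l k i) h0 j
    exact (mul_eq_zero.mp this).resolve_left hcj
  -- contradiction: evaluate hE j at φ j
  have hEφ := congrArg (fun T : H →ₗ[ℂ] H => T (φ j)) (hE j)
  have hinner : (⟪φ j, φ j⟫ : ℂ) = 1 := by
    rw [inner_self_eq_norm_sq_to_K, hφ j]; norm_num
  simp only [LinearMap.sum_apply, LinearMap.comp_apply, LinearMap.smul_apply,
    rankOne, LinearMap.coe_mk, AddHom.coe_mk, map_smul, hl, hlkj, hinner,
    zero_smul, smul_zero, Finset.sum_const_zero, one_smul] at hEφ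
  have hφj : φ j ≠ 0 := by
    intro h
    have := hφ j
    rw [h, norm_zero] at this
    norm_num at this
  have hpj : ((p j : ℂ)) ≠ 0 := by
    exact_mod_cast (hp j).ne'
  exact hφj (by
    have := hEφ.symm
    rwa [smul_eq_zero_iff_right hpj] at this)
end

section
/- Let ψ, ψ⊥, φ be orthonormal vectors in a complex Hilbert space, let a, b be nonzero complex numbers, and let α, β be nonzero complex numbers. For phases θ₁, θ₂, θ₃, define Ψ₁ = αψ + βe^{iθ₁}φ, Ψ₂ = αψ⊥ + βe^{iθ₂}φ, and Ψ₃ = α(aψ + bψ⊥) + βe^{iθ₃}φ. Then Ψ₁, Ψ₂, Ψ₃ are linearly dependent if and only if e^{iθ₃} = a·e^{iθ₁} + b·e^{iθ₂}. -/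
/-! In the coordinates given by the independent family `ψ, ψ⊥, φ`, the vectors `Ψ₁, Ψ₂, Ψ₃` are the
rows of a 3×3 matrix with determinant `α² β (e^{iθ₃} - a e^{iθ₁} - b e^{iθ₂})`, so they are dependent
exactly when this vanishes. -/

open scoped ComplexInnerProductSpace

theorem LinearIndependent.linearIndependent_sum_smul_iff_det_ne_zero {K M ι : Type*} [Field K]
    [AddCommGroup M] [Module K M] [Fintype ι] [DecidableEq ι] {e : ι → M}
    (he : LinearIndependent K e) (A : Matrix ι ι K) :
    LinearIndependent K (fun i ↦ ∑ j, A i j • e j) ↔ A.det ≠ 0 := by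
  have hker : LinearMap.ker (Fintype.linearCombination K e) = ⊥ :=
    LinearMap.ker_eq_bot.mpr (linearIndependent_iff_injective_fintypeLinearCombination.mp he)
  have hcomp : (fun i ↦ ∑ j, A i j • e j) = Fintype.linearCombination K e ∘ A.row := by
    funext i; exact (Fintype.linearCombination_apply K e (A i)).symm
  rw [hcomp, LinearMap.linearIndependent_iff _ hker, Matrix.linearIndependent_rows_iff_isUnit,
    Matrix.isUnit_iff_isUnit_det, isUnit_iff_ne_zero]

theorem linearIndependent_fin_three_of_norm_eq_one_of_inner_eq_zero {𝕜 H : Type*} [RCLike 𝕜]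
    [NormedAddCommGroup H] [InnerProductSpace 𝕜 H] {u v w : H} (hu : ‖u‖ = 1) (hv : ‖v‖ = 1)
    (hw : ‖w‖ = 1) (huv : inner 𝕜 u v = 0) (huw : inner 𝕜 u w = 0) (hvw : inner 𝕜 v w = 0) :
    LinearIndependent 𝕜 ![u, v, w] := by
  refine linearIndependent_of_ne_zero_of_inner_eq_zero (fun i ↦ ?_) fun i j hij ↦ ?_
  · fin_cases i <;> simp [← norm_ne_zero_iff, hu, hv, hw]
  · fin_cases i <;> fin_cases j <;> simp_all [inner_eq_zero_symm]

theorem not_linearIndependent_superposition_iff {K M : Type*} [Field K] [AddCommGroup M]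
    [Module K M] {u v w : M} (huvw : LinearIndependent K ![u, v, w]) {α β : K} (hα : α ≠ 0)
    (hβ : β ≠ 0) (a b c₁ c₂ c₃ : K) :
    ¬ LinearIndependent K
        ![α • u + (β * c₁) • w, α • v + (β * c₂) • w, α • (a • u + b • v) + (β * c₃) • w] ↔
      c₃ = a * c₁ + b * c₂ := by
  let A : Matrix (Fin 3) (Fin 3) K := !![α, 0, β * c₁; 0, α, β * c₂; α * a, α * b, β * c₃]
  have hfamily : ![α • u + (β * c₁) • w, α • v + (β * c₂) • w,
      α • (a • u + b • v) + (β * c₃) • w] = fun i ↦ ∑ j, A i j • ![u, v, w] j := by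
    funext i
    fin_cases i <;>
      simp only [A, Fin.sum_univ_three, Fin.zero_eta, Fin.mk_one, Fin.reduceFinMk, Fin.isValue,
        Matrix.of_apply, Matrix.cons_val', Matrix.cons_val_zero, Matrix.cons_val_one,
        Matrix.cons_val, Matrix.cons_val_fin_one] <;>
      module
  have hdet : A.det = α ^ 2 * β * (c₃ - (a * c₁ + b * c₂)) := by
    simp only [A, Matrix.det_fin_three, Matrix.of_apply, Matrix.cons_val', Matrix.cons_val_zero,
      Matrix.cons_val_one, Matrix.cons_val, Matrix.cons_val_fin_one, Fin.isValue]
    ring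
  rw [hfamily, huvw.linearIndependent_sum_smul_iff_det_ne_zero, hdet, not_not]
  simp [hα, hβ, sub_eq_zero]

theorem stmt7_general {H : Type*} [NormedAddCommGroup H] [InnerProductSpace ℂ H]
    (ψ ψp φ : H) (hψ : ‖ψ‖ = 1) (hψp : ‖ψp‖ = 1) (hφ : ‖φ‖ = 1)
    (h₁ : ⟪ψ, ψp⟫ = 0) (h₂ : ⟪ψ, φ⟫ = 0) (h₃ : ⟪ψp, φ⟫ = 0)
    (a b α β : ℂ) (hα : α ≠ 0) (hβ : β ≠ 0)
    (θ₁ θ₂ θ₃ : ℝ) :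
    ¬ LinearIndependent ℂ
        ![α • ψ + (β * Complex.exp (θ₁ * Complex.I)) • φ,
          α • ψp + (β * Complex.exp (θ₂ * Complex.I)) • φ,
          α • (a • ψ + b • ψp) + (β * Complex.exp (θ₃ * Complex.I)) • φ] ↔
      Complex.exp (θ₃ * Complex.I) =
        a * Complex.exp (θ₁ * Complex.I) + b * Complex.exp (θ₂ * Complex.I) :=
  not_linearIndependent_superposition_iff
    (linearIndependent_fin_three_of_norm_eq_one_of_inner_eq_zero hψ hψp hφ h₁ h₂ h₃) hα hβ _ _ _ _ _

/-- with orthonormal `ψ, ψ⊥, φ` and nonzero `a, b, α, β`, the three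
superposed outputs `Ψ₁, Ψ₂, Ψ₃` are linearly dependent iff
`e^{iθ₃} = a e^{iθ₁} + b e^{iθ₂}`. -/
theorem stmt7 {H : Type*} [NormedAddCommGroup H] [InnerProductSpace ℂ H]
    (ψ ψp φ : H) (hψ : ‖ψ‖ = 1) (hψp : ‖ψp‖ = 1) (hφ : ‖φ‖ = 1)
    (h₁ : ⟪ψ, ψp⟫ = 0) (h₂ : ⟪ψ, φ⟫ = 0) (h₃ : ⟪ψp, φ⟫ = 0)
    (a b α β : ℂ) (ha : a ≠ 0) (hb : b ≠ 0) (hα : α ≠ 0) (hβ : β ≠ 0)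
    (θ₁ θ₂ θ₃ : ℝ) :
    ¬ LinearIndependent ℂ
        ![α • ψ + (β * Complex.exp (θ₁ * Complex.I)) • φ,
          α • ψp + (β * Complex.exp (θ₂ * Complex.I)) • φ,
          α • (a • ψ + b • ψp) + (β * Complex.exp (θ₃ * Complex.I)) • φ] ↔
      Complex.exp (θ₃ * Complex.I) =
        a * Complex.exp (θ₁ * Complex.I) + b * Complex.exp (θ₂ * Complex.I) :=
  stmt7_general ψ ψp φ hψ hψp hφ h₁ h₂ h₃ a b α β hα hβ θ₁ θ₂ θ₃
end

section
/- If x is a complex number satisfying x² = x, then x = 0 or x = 1. Consequently, if an isometry V on a Hilbert space satisfies V(ψ⊗ψ) = ψ⊗e for all unit vectors ψ (with a fixed unit vector e), then any two unit vectors ψ, φ satisfy ⟨ψ,φ⟩ ∈ {0, 1}. -/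
open scoped ComplexInnerProductSpace

/-!
Taking the inner product of `V (ψ ⊗ ψ) = ψ ⊗ e` with `V (φ ⊗ φ) = φ ⊗ e` and using that `V`
preserves inner products gives `⟪ψ, φ⟫ ^ 2 = ⟪ψ, φ⟫ * ‖e‖ ^ 2 = ⟪ψ, φ⟫`, so the overlap is an
idempotent complex number, hence `0` or `1`.
-/

section DiagonalMap

variable {H K : Type*} [NormedAddCommGroup H] [InnerProductSpace ℂ H]
  [NormedAddCommGroup K] [InnerProductSpace ℂ K]

theorem inner_sq_eq_inner_of_map_diag_eq {t : H → H → K}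
    (ht : ∀ x y x' y' : H, ⟪t x y, t x' y'⟫ = ⟪x, x'⟫ * ⟪y, y'⟫)
    {V : K → K} (hV : ∀ x y : K, ⟪V x, V y⟫ = ⟪x, y⟫) {e : H} (he : ‖e‖ = 1) {ψ φ : H}
    (hψ : V (t ψ ψ) = t ψ e) (hφ : V (t φ φ) = t φ e) :
    ⟪ψ, φ⟫ ^ 2 = ⟪ψ, φ⟫ := by
  have hee : ⟪e, e⟫ = 1 := by simp [inner_self_eq_norm_sq_to_K, he]
  calc ⟪ψ, φ⟫ ^ 2 = ⟪V (t ψ ψ), V (t φ φ)⟫ := by rw [hV, ht, sq]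
    _ = ⟪ψ, φ⟫ := by rw [hψ, hφ, ht, hee, mul_one]

end DiagonalMap

/-- The Hilbert tensor square `H ⊗ H` is modelled by a Hilbert space `K` with a bilinear map `t`
satisfying `⟪t x y, t x' y'⟫ = ⟪x, x'⟫ * ⟪y, y'⟫`. -/
theorem stmt9_general {H K : Type*} [NormedAddCommGroup H] [InnerProductSpace ℂ H]
    [NormedAddCommGroup K] [InnerProductSpace ℂ K]
    (t : H →ₗ[ℂ] H →ₗ[ℂ] K)
    (ht : ∀ x y x' y' : H, ⟪t x y, t x' y'⟫ = ⟪x, x'⟫ * ⟪y, y'⟫)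
    (e : H) (he : ‖e‖ = 1)
    (V : K →ₗ[ℂ] K) (hV : ∀ x y : K, ⟪V x, V y⟫ = ⟪x, y⟫)
    (hdel : ∀ ψ : H, ‖ψ‖ = 1 → V (t ψ ψ) = t ψ e) :
    (∀ x : ℂ, x ^ 2 = x → x = 0 ∨ x = 1) ∧
      (∀ ψ φ : H, ‖ψ‖ = 1 → ‖φ‖ = 1 → ⟪ψ, φ⟫ = 0 ∨ ⟪ψ, φ⟫ = 1) :=
  ⟨fun _ => eq_zero_or_one_of_sq_eq_self, fun _ _ hψ hφ => eq_zero_or_one_of_sq_eq_self <|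
    inner_sq_eq_inner_of_map_diag_eq (t := fun x y => t x y) ht hV he (hdel _ hψ) (hdel _ hφ)⟩

/-- (i) `x² = x` forces `x ∈ {0, 1}` in ℂ; (ii) consequently, if a
linear isometry `V` on the (Hilbert) tensor square satisfies `V(ψ ⊗ ψ) = ψ ⊗ e`
for all unit vectors `ψ`, then any two unit vectors have overlap in `{0, 1}`.
Since Mathlib has no Hilbert tensor product, the tensor square is abstracted as
a Hilbert space `K` together with a bilinear map `t` satisfying the
characteristic identity `⟨t x y, t x' y'⟩ = ⟨x, x'⟩ * ⟨y, y'⟩`. -/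
theorem stmt9 {H K : Type*} [NormedAddCommGroup H] [InnerProductSpace ℂ H]
    [NormedAddCommGroup K] [InnerProductSpace ℂ K] [CompleteSpace H] [CompleteSpace K]
    (hdim : 2 ≤ Module.rank ℂ H)
    (t : H →ₗ[ℂ] H →ₗ[ℂ] K)
    (ht : ∀ x y x' y' : H, ⟪t x y, t x' y'⟫ = ⟪x, x'⟫ * ⟪y, y'⟫)
    (e : H) (he : ‖e‖ = 1)
    (V : K →ₗ[ℂ] K) (hV : ∀ x y : K, ⟪V x, V y⟫ = ⟪x, y⟫)
    (hdel : ∀ ψ : H, ‖ψ‖ = 1 → V (t ψ ψ) = t ψ e) :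
    (∀ x : ℂ, x ^ 2 = x → x = 0 ∨ x = 1) ∧
      (∀ ψ φ : H, ‖ψ‖ = 1 → ‖φ‖ = 1 → ⟪ψ, φ⟫ = 0 ∨ ⟪ψ, φ⟫ = 1) :=
  stmt9_general t ht e he V hV hdel
end

section
/- There is no linear isometry V on the tensor square of a complex Hilbert space of dimension at least 2 such that V(ψ⊗ψ) = ψ⊗e for all unit vectors ψ, where e is a fixed unit vector (no-deleting). -/
/-! An isometry preserves inner products, so `V(ψ ⊗ ψ) = ψ ⊗ e` forces
`⟪ψ, φ⟫² = ⟪ψ ⊗ ψ, φ ⊗ φ⟫ = ⟪ψ ⊗ e, φ ⊗ e⟫ = ⟪ψ, φ⟫` for all unit vectors `ψ, φ`.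
Thus inner products of unit vectors could only be `0` or `1`, whereas two orthonormal vectors
`x, y` give `⟪x, 3/5 x + 4/5 y⟫ = 3/5`. -/

open scoped ComplexInnerProductSpace

section

open scoped InnerProductSpace

variable {𝕜 E : Type*} [RCLike 𝕜] [NormedAddCommGroup E] [InnerProductSpace 𝕜 E]

theorem exists_orthonormal_of_le_rank {n : ℕ} (hn : n ≤ Module.rank 𝕜 E) :
    ∃ v : Fin n → E, Orthonormal 𝕜 v := by
  obtain ⟨f, hf⟩ := exists_linearIndependent_of_le_rank hn
  exact ⟨_, InnerProductSpace.gramSchmidtNormed_orthonormal hf⟩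

theorem exists_norm_eq_one_inner_eq_three_fifths (hE : 2 ≤ Module.rank 𝕜 E) :
    ∃ ψ φ : E, ‖ψ‖ = 1 ∧ ‖φ‖ = 1 ∧ ⟪ψ, φ⟫_𝕜 = 3 / 5 := by
  obtain ⟨v, hv⟩ := exists_orthonormal_of_le_rank (n := 2) (by exact_mod_cast hE)
  have hv' := orthonormal_iff_ite.mp hv
  set φ := (3 / 5 : 𝕜) • v 0 + (4 / 5 : 𝕜) • v 1
  refine ⟨v 0, φ, hv.1 0, ?_, ?_⟩
  · have h := norm_add_sq_eq_norm_sq_add_norm_sq_of_inner_eq_zero (𝕜 := 𝕜) ((3 / 5 : 𝕜) • v 0)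
      ((4 / 5 : 𝕜) • v 1) (by simp [inner_smul_left, inner_smul_right, hv'])
    norm_num [norm_smul, hv.1] at h
    nlinarith [norm_nonneg φ]
  · rw [inner_add_right, inner_smul_right, inner_smul_right, hv', hv']
    norm_num

theorem inner_sq_eq_inner_of_deleting_isometry {K : Type*} [NormedAddCommGroup K]
    [InnerProductSpace 𝕜 K] {t : E → E → K}
    (ht : ∀ x y x' y' : E, ⟪t x y, t x' y'⟫_𝕜 = ⟪x, x'⟫_𝕜 * ⟪y, y'⟫_𝕜)
    {e : E} (he : ‖e‖ = 1) {V : K → K} (hV : ∀ x y : K, ⟪V x, V y⟫_𝕜 = ⟪x, y⟫_𝕜)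
    (hdel : ∀ ψ : E, ‖ψ‖ = 1 → V (t ψ ψ) = t ψ e) {ψ φ : E} (hψ : ‖ψ‖ = 1) (hφ : ‖φ‖ = 1) :
    ⟪ψ, φ⟫_𝕜 ^ 2 = ⟪ψ, φ⟫_𝕜 :=
  calc ⟪ψ, φ⟫_𝕜 ^ 2 = ⟪V (t ψ ψ), V (t φ φ)⟫_𝕜 := by rw [hV, ht, sq]
    _ = ⟪ψ, φ⟫_𝕜 * ⟪e, e⟫_𝕜 := by rw [hdel ψ hψ, hdel φ hφ, ht]
    _ = ⟪ψ, φ⟫_𝕜 := by rw [inner_self_eq_one_of_norm_eq_one he, mul_one]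

end

-- The Hilbert tensor square `H ⊗ H` is modelled by `K` with the bilinear map `t x y = x ⊗ y`.
theorem stmt10_general {H K : Type*} [NormedAddCommGroup H] [InnerProductSpace ℂ H]
    [NormedAddCommGroup K] [InnerProductSpace ℂ K]
    (hdim : 2 ≤ Module.rank ℂ H)
    (t : H →ₗ[ℂ] H →ₗ[ℂ] K)
    (ht : ∀ x y x' y' : H, ⟪t x y, t x' y'⟫ = ⟪x, x'⟫ * ⟪y, y'⟫)
    (e : H) (he : ‖e‖ = 1) :
    ¬ ∃ V : K →ₗ[ℂ] K,
        (∀ x y : K, ⟪V x, V y⟫ = ⟪x, y⟫) ∧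
        (∀ ψ : H, ‖ψ‖ = 1 → V (t ψ ψ) = t ψ e) := by
  rintro ⟨V, hV, hdel⟩
  obtain ⟨ψ, φ, hψ, hφ, hψφ⟩ := exists_norm_eq_one_inner_eq_three_fifths (𝕜 := ℂ) hdim
  have h := inner_sq_eq_inner_of_deleting_isometry (t := fun x y => t x y) ht he hV hdel hψ hφ
  rw [hψφ] at h
  norm_num at h

/-- no-deleting: on a complex Hilbert space of dimension ≥ 2,
there is no linear isometry `V` of the tensor square with `V(ψ ⊗ ψ) = ψ ⊗ e`
for all unit vectors `ψ`. Since Mathlib has no Hilbert tensor product, the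
tensor square is abstracted as a Hilbert space `K` with a bilinear map `t`
satisfying `⟨t x y, t x' y'⟩ = ⟨x, x'⟩ * ⟨y, y'⟩`. -/
theorem stmt10 {H K : Type*} [NormedAddCommGroup H] [InnerProductSpace ℂ H]
    [NormedAddCommGroup K] [InnerProductSpace ℂ K] [CompleteSpace H] [CompleteSpace K]
    (hdim : 2 ≤ Module.rank ℂ H)
    (t : H →ₗ[ℂ] H →ₗ[ℂ] K)
    (ht : ∀ x y x' y' : H, ⟪t x y, t x' y'⟫ = ⟪x, x'⟫ * ⟪y, y'⟫)
    (e : H) (he : ‖e‖ = 1) :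
    ¬ ∃ V : K →ₗ[ℂ] K,
        (∀ x y : K, ⟪V x, V y⟫ = ⟪x, y⟫) ∧
        (∀ ψ : H, ‖ψ‖ = 1 → V (t ψ ψ) = t ψ e) :=
  stmt10_general hdim t ht e he
end
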